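/- Let Q be a finite set of points in ℝ², let p, q ∈ Q be distinct, let u be a unit vector with ⟪u, q − p⟫ = 0, and let H = {y : ⟪y − p, u⟫ > 0} be one open side of the line through p and q. Then the set A = {α > 0 : there exists c ∈ H with dist(c, p) = dist(c, q) = α and dist(c, r) ≥ α for all r ∈ Q \ {p, q}} of radii α for which {p, q} admits an empty α-ball centered in H is order-convex: if α₁, α₂ ∈ A and α₁ ≤ β ≤ α₂, then β ∈ A. -/

import Mathlib

/-!
Every centre `c` of a circle through `p` and `q` lies on the perpendicular bisector, which in the
plane is the line `t ↦ m + t • u` through the midpoint `m`; the side condition says `t > 0`.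
For each `r`, the condition `dist c p ≤ dist c r` cuts out a half-plane of centres, hence a
half-line of parameters `t`, so the admissible parameters form an interval. The radius
`dist (m + t • u) p` is continuous in `t`, and a continuous image of an interval is an interval.
-/

open Metric

noncomputable abbrev Pt : Type := EuclideanSpace ℝ (Fin 2)

/-- The set of radii `α > 0` for which the edge `{p, q}` admits an empty `α`-ball
(with respect to `Q`) centered in the open halfplane `H = {y | ⟪y - p, u⟫ > 0}`. -/
def AlphaRadii (Q : Set Pt) (p q u : Pt) : Set ℝ :=
  {α : ℝ | 0 < α ∧ ∃ c : Pt, (0 : ℝ) < inner ℝ (c - p) u ∧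
    dist c p = α ∧ dist c q = α ∧ ∀ r ∈ Q \ ({p, q} : Set Pt), α ≤ dist c r}

open RealInnerProductSpace AffineSubspace Module

section

variable {E : Type*} [NormedAddCommGroup E] [InnerProductSpace ℝ E]

theorem convex_setOf_dist_le_dist (p r : E) : Convex ℝ {x : E | dist x p ≤ dist x r} := by
  have hhalf : {x : E | dist x p ≤ dist x r} = {x | 2 * ⟪r - p, x⟫ ≤ ‖r‖ ^ 2 - ‖p‖ ^ 2} := by
    refine Set.ext fun x => ?_
    change dist x p ≤ dist x r ↔ 2 * ⟪r - p, x⟫ ≤ ‖r‖ ^ 2 - ‖p‖ ^ 2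
    rw [dist_eq_norm, dist_eq_norm, ← sq_le_sq₀ (norm_nonneg _) (norm_nonneg _),
      norm_sub_sq_real, norm_sub_sq_real, inner_sub_left, real_inner_comm x p,
      real_inner_comm x r]
    constructor <;> intro h <;> linarith
  rw [hhalf]
  exact convex_halfSpace_le ⟨fun x y => by rw [inner_add_right, mul_add],
    fun c x => by rw [real_inner_smul_right, smul_eq_mul]; ring⟩ _

theorem convex_setOf_pos_forall_dist_le (Q : Set E) (m p u : E) :
    Convex ℝ {t : ℝ | 0 < t ∧ ∀ r ∈ Q, dist (m + t • u) p ≤ dist (m + t • u) r} := by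
  have hline : ∀ t : ℝ, AffineMap.lineMap m (m + u) t = m + t • u := fun t => by
    rw [AffineMap.lineMap_apply_module', add_sub_cancel_left, add_comm]
  have hS : {t : ℝ | 0 < t ∧ ∀ r ∈ Q, dist (m + t • u) p ≤ dist (m + t • u) r} =
      Set.Ioi 0 ∩ ⋂ r ∈ Q, AffineMap.lineMap m (m + u) ⁻¹' {x | dist x p ≤ dist x r} := by
    ext t; simp [hline]
  rw [hS]
  exact (convex_Ioi 0).inter <| convex_iInter₂ fun r _ =>
    (convex_setOf_dist_le_dist p r).affine_preimage _

variable {p q u : E}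

theorem inner_midpoint_add_smul_sub_left (hu : ‖u‖ = 1) (horth : ⟪u, q - p⟫ = 0) (t : ℝ) :
    ⟪midpoint ℝ p q + t • u - p, u⟫ = t := by
  have hmid : midpoint ℝ p q - p = (⅟2 : ℝ) • (q - p) := midpoint_vsub_left p q
  rw [add_sub_right_comm, hmid, inner_add_left, real_inner_smul_left, real_inner_smul_left,
    real_inner_comm, horth, real_inner_self_eq_norm_sq, hu]
  ring

theorem midpoint_add_smul_mem_perpBisector (horth : ⟪u, q - p⟫ = 0) (t : ℝ) :
    midpoint ℝ p q + t • u ∈ perpBisector p q := by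
  rw [mem_perpBisector_iff_inner_eq_zero, vsub_eq_sub, vsub_eq_sub, add_sub_cancel_left,
    real_inner_smul_left, horth, mul_zero]

theorem exists_eq_midpoint_add_smul_of_mem_perpBisector [Fact (finrank ℝ E = 2)] (hpq : p ≠ q)
    (hu : u ≠ 0) (horth : ⟪u, q - p⟫ = 0) {c : E} (hc : c ∈ perpBisector p q) :
    ∃ t : ℝ, c = midpoint ℝ p q + t • u := by
  rw [mem_perpBisector_iff_inner_eq_zero'] at hc
  obtain ⟨t, ht⟩ := Submodule.mem_span_singleton.mp <|
    Submodule.mem_span_singleton_of_inner_eq_zero_of_inner_eq_zero (sub_ne_zero.mpr hpq.symm) hu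
      hc (by rwa [real_inner_comm])
  exact ⟨t, by rw [ht, vsub_eq_sub, add_sub_cancel]⟩

end

-- `open EuclideanSpace` provides the instance `Fact (finrank ℝ Pt = 2)`.
open EuclideanSpace in
theorem alphaRadii_eq_image {Q : Set Pt} {p q u : Pt} (hpq : p ≠ q) (hu : ‖u‖ = 1)
    (horth : ⟪u, q - p⟫ = 0) :
    AlphaRadii Q p q u = (fun t : ℝ => dist (midpoint ℝ p q + t • u) p) ''
      {t : ℝ | 0 < t ∧ ∀ r ∈ Q \ {p, q},
        dist (midpoint ℝ p q + t • u) p ≤ dist (midpoint ℝ p q + t • u) r} := by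
  ext α
  constructor
  · rintro ⟨-, c, hcu, hcp, hcq, hempty⟩
    obtain ⟨t, rfl⟩ := exists_eq_midpoint_add_smul_of_mem_perpBisector hpq
      (norm_ne_zero_iff.mp (hu ▸ one_ne_zero)) horth
      (mem_perpBisector_iff_dist_eq.mpr (hcp.trans hcq.symm))
    rw [inner_midpoint_add_smul_sub_left hu horth] at hcu
    exact ⟨t, ⟨hcu, fun r hr => hcp ▸ hempty r hr⟩, hcp⟩
  · rintro ⟨t, ⟨ht, hempty⟩, rfl⟩
    have hcu := inner_midpoint_add_smul_sub_left hu horth t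
    refine ⟨dist_pos.mpr fun hcp => ?_, _, hcu.symm ▸ ht, rfl,
      (mem_perpBisector_iff_dist_eq.mp (midpoint_add_smul_mem_perpBisector horth t)).symm,
      hempty⟩
    rw [hcp, sub_self, inner_zero_left] at hcu
    exact ht.ne hcu

theorem stmt10_general (Q : Set Pt) (p q : Pt) (hpq : p ≠ q)
    (u : Pt) (hu : ‖u‖ = 1) (horth : (inner ℝ u (q - p) : ℝ) = 0) :
    ∀ α₁ ∈ AlphaRadii Q p q u, ∀ α₂ ∈ AlphaRadii Q p q u,
      ∀ β : ℝ, α₁ ≤ β → β ≤ α₂ → β ∈ AlphaRadii Q p q u := by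
  intro α₁ h₁ α₂ h₂ β hβ₁ hβ₂
  have hconn : IsPreconnected (AlphaRadii Q p q u) := by
    rw [alphaRadii_eq_image hpq hu horth]
    exact (convex_setOf_pos_forall_dist_le _ _ _ _).isPreconnected.image _
      ((continuous_const.add (continuous_id.smul continuous_const)).dist
        continuous_const).continuousOn
  exact hconn.Icc_subset h₁ h₂ ⟨hβ₁, hβ₂⟩

/-- The set of radii of empty `α`-balls of the edge `{p, q}` centered on
one fixed side of the line through `p` and `q` is order-convex. -/
theorem stmt10 (Q : Set Pt) (hQ : Q.Finite) (p q : Pt)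
    (hp : p ∈ Q) (hq : q ∈ Q) (hpq : p ≠ q)
    (u : Pt) (hu : ‖u‖ = 1) (horth : (inner ℝ u (q - p) : ℝ) = 0) :
    ∀ α₁ ∈ AlphaRadii Q p q u, ∀ α₂ ∈ AlphaRadii Q p q u,
      ∀ β : ℝ, α₁ ≤ β → β ≤ α₂ → β ∈ AlphaRadii Q p q u :=
  stmt10_general Q p q hpq u hu horth
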